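/- arXiv:2601.18041 — 2 statements merged into one kernel-verified Lean document; each statement's English description precedes it below -/
import Mathlib

section
/- For any elements σ ∈ Ω_n, σ' ∈ Ω_{n'} of an nc set Ω over Gr^{(d;m)}(A), and any s ∈ GL_n(R), the following identities hold in Gr^{(d;m)}: (i) [[I_{n+n'}, T₁],[0, I_n]] · ((σ⊕σ')⊕σ) = (σ⊕σ')⊕σ with T₁ = [I_n; 0]; (ii) [[I_{n+n'}, T₂],[0, I_{n'}]] · ((σ⊕σ')⊕σ') = (σ⊕σ')⊕σ' with T₂ = [0; I_{n'}]; (iii) [[I_n, s^{-1}],[0, I_n]] · (σ ⊕ (s·σ)) = σ ⊕ (s·σ). -/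
open Matrix

/-- `n × n` matrices over `A`. -/
abbrev Mat (A : Type) (n : ℕ) : Type := Matrix (Fin n) (Fin n) A

/-- `m × m` block matrices with `n × n` blocks over `A`, i.e. `M_m(M_n(A))`. -/
abbrev BMat (A : Type) (m n : ℕ) : Type := Matrix (Fin m) (Fin m) (Mat A n)

section NC

variable {R : Type} [CommRing R] {A : Type} [Ring A]

/-- Membership in the subgroup `H^{(d;m)}_n(A)` of invertible block lower-triangular
matrices `[[X,0],[Y,Z]]` with `X ∈ GL_{m-d}`, `Z ∈ GL_d`. -/
def memH (m d n : ℕ) (hd : d ≤ m) (Γ : BMat A m n) : Prop :=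
  IsUnit Γ ∧
  (∀ i j : Fin m, (i : ℕ) < m - d → m - d ≤ (j : ℕ) → Γ i j = 0) ∧
  IsUnit (Matrix.of fun i j : Fin (m - d) =>
    Γ ⟨(i : ℕ), lt_of_lt_of_le i.isLt (Nat.sub_le m d)⟩
      ⟨(j : ℕ), lt_of_lt_of_le j.isLt (Nat.sub_le m d)⟩) ∧
  IsUnit (Matrix.of fun i j : Fin d =>
    Γ ⟨m - d + (i : ℕ), by have := i.isLt; omega⟩
      ⟨m - d + (j : ℕ), by have := j.isLt; omega⟩)

/-- The relation `X ~ Y` iff `X = Y Γ` for some `Γ ∈ H^{(d;m)}_n(A)`. -/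
def grel (m d n : ℕ) (hd : d ≤ m) (X Y : BMat A m n) : Prop :=
  ∃ Γ : BMat A m n, memH m d n hd Γ ∧ X = Y * Γ

/-- Direct sum of square matrices. -/
def dsumMat {n n' : ℕ} (X : Mat A n) (Y : Mat A n') : Mat A (n + n') :=
  Matrix.reindex finSumFinEquiv finSumFinEquiv (Matrix.fromBlocks X 0 0 Y)

/-- Entrywise block direct sum `X ⊕̃ Y` of elements of `M_m(M_n(A))`, `M_m(M_{n'}(A))`. -/
def dsum {m n n' : ℕ} (X : BMat A m n) (Y : BMat A m n') : BMat A m (n + n') :=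
  Matrix.of fun i j => dsumMat (X i j) (Y i j)

/-- Direct sum of square matrices with entries in a module. -/
def dsumW {W : Type} [AddCommMonoid W] {n n' : ℕ}
    (X : Matrix (Fin n) (Fin n) W) (Y : Matrix (Fin n') (Fin n') W) :
    Matrix (Fin (n + n')) (Fin (n + n')) W :=
  Matrix.reindex finSumFinEquiv finSumFinEquiv (Matrix.fromBlocks X 0 0 Y)

/-- Block upper triangular matrix `[[P, H],[0, Q]]`. -/
def triW {W : Type} [AddCommMonoid W] {n n' : ℕ}
    (P : Matrix (Fin n) (Fin n) W) (H : Matrix (Fin n) (Fin n') W)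
    (Q : Matrix (Fin n') (Fin n') W) :
    Matrix (Fin (n + n')) (Fin (n + n')) W :=
  Matrix.reindex finSumFinEquiv finSumFinEquiv (Matrix.fromBlocks P H 0 Q)

/-- The unipotent upper triangular matrix `[[I, T],[0, I]]` over `R`. -/
def uptri (R : Type) [CommRing R] {p q : ℕ} (T : Matrix (Fin p) (Fin q) R) :
    Matrix (Fin (p + q)) (Fin (p + q)) R :=
  Matrix.reindex finSumFinEquiv finSumFinEquiv (Matrix.fromBlocks 1 T 0 1)

/-- Left multiplication of a representative by `s^{⊕ m}` for a scalar matrix `s` over `R`: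
the similarity action on the nc Grassmannian. -/
def simAct [Algebra R A] {m N : ℕ} (s : Matrix (Fin N) (Fin N) R) (X : BMat A m N) :
    BMat A m N :=
  Matrix.of fun i j => s.map (algebraMap R A) * X i j

/-- Multiplication of a matrix over an `R`-module `W` by a matrix over `R` on the left. -/
def rmulL {W : Type} [AddCommMonoid W] [Module R W] {p q r : ℕ}
    (s : Matrix (Fin p) (Fin q) R) (X : Matrix (Fin q) (Fin r) W) :
    Matrix (Fin p) (Fin r) W :=
  Matrix.of fun i j => ∑ k, s i k • X k j

/-- Multiplication of a matrix over an `R`-module `W` by a matrix over `R` on the right. -/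
def rmulR {W : Type} [AddCommMonoid W] [Module R W] {p q r : ℕ}
    (X : Matrix (Fin p) (Fin q) W) (s : Matrix (Fin q) (Fin r) R) :
    Matrix (Fin p) (Fin r) W :=
  Matrix.of fun i j => ∑ k, s k j • X i k

/-- Vertical concatenation of matrices. -/
def vcat {α : Type} {p p' q : ℕ} (X : Matrix (Fin p) (Fin q) α)
    (Y : Matrix (Fin p') (Fin q) α) : Matrix (Fin (p + p')) (Fin q) α :=
  Matrix.of fun i j =>
    if h : (i : ℕ) < p then X ⟨(i : ℕ), h⟩ j
    else Y ⟨(i : ℕ) - p, by have := i.isLt; omega⟩ j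

/-- The affine embedding `X ↦ [[0, I],[I, X]]` in the case `(d;m) = (1;2)`. -/
def affEmb {n : ℕ} (X : Mat A n) : BMat A 2 n := !![0, 1; 1, X]

/-- The matrix `[[0, X],[0, 0]] ∈ M_{n+n'}(A)` with `X ∈ M_{n,n'}(A)` in the upper right
corner. -/
def cornerMat {n n' : ℕ} (X : Matrix (Fin n) (Fin n') A) : Mat A (n + n') :=
  Matrix.reindex finSumFinEquiv finSumFinEquiv (Matrix.fromBlocks 0 X 0 0)

/-- The representative `(P;Q)_{u,v}(X)` of the element `(σ;σ')_{u,v}(X)`: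
`P ⊕̃ Q + Σ_{j=1}^d [[0, X Q_{v, m-d+j}],[0,0]] ⊗ e^{(m)}_{d+u, m-d+j}`. -/
def ins {m d n n' : ℕ} (hd : d ≤ m) (u : Fin (m - d)) (v : Fin d)
    (P : BMat A m n) (Q : BMat A m n') (X : Matrix (Fin n) (Fin n') A) :
    BMat A m (n + n') :=
  dsum P Q + Matrix.of fun (i j : Fin m) =>
    if (i : ℕ) = d + (u : ℕ) ∧ m - d ≤ (j : ℕ) then
      cornerMat (X * Q ⟨(v : ℕ), lt_of_lt_of_le v.isLt hd⟩ j)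
    else 0

/-- The matrix unit `e^{(md,d)}_{u,v} ⊗ X`. -/
def eMat {md d : ℕ} {n : ℕ} (u : Fin md) (v : Fin d) (X : Mat A n) :
    Matrix (Fin md) (Fin d) (Mat A n) :=
  Matrix.of fun i j => if i = u ∧ j = v then X else 0

/-- The block matrix `[[I_d ⊗ I_n, 0],[-Y, I_{m-d} ⊗ I_n]]` used to define `σ(Y)`. -/
def shiftMat {m d n : ℕ} (hd : d ≤ m) (Y : Matrix (Fin (m - d)) (Fin d) (Mat A n)) :
    BMat A m n :=
  Matrix.of fun i j =>
    (if i = j then (1 : Mat A n) else 0) +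
    (if h : d ≤ (i : ℕ) ∧ (j : ℕ) < d then
      -Y ⟨(i : ℕ) - d, by have := i.isLt; omega⟩ ⟨(j : ℕ), h.2⟩
    else 0)

/-- A family `C` of sets of representatives is an nc set over `Gr^{(d;m)}(A)`:
it consists of invertible matrices, is saturated under the relation `~`
(i.e. it is a set of equivalence classes), and is closed under direct sums. -/
def IsNCSetCarrier {m d : ℕ} (hd : d ≤ m) (C : ∀ n, Set (BMat A m n)) : Prop :=
  (∀ n, ∀ a ∈ C n, IsUnit a) ∧
  (∀ n, ∀ a b : BMat A m n, grel m d n hd a b → (a ∈ C n ↔ b ∈ C n)) ∧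
  (∀ n n', ∀ a ∈ C n, ∀ b ∈ C n', dsum a b ∈ C (n + n'))

/-- `f` is an nc function on the nc set (with carrier) `C` over `Gr^{(d;m)}(A)`:
it descends to equivalence classes, preserves direct sums, and is similarity preserving. -/
def IsNCFun (R : Type) [CommRing R] [Algebra R A] {W : Type} [AddCommMonoid W] [Module R W]
    {m d : ℕ} (hd : d ≤ m) (C : ∀ n, Set (BMat A m n))
    (f : ∀ n, BMat A m n → Matrix (Fin n) (Fin n) W) : Prop :=
  (∀ n, ∀ a ∈ C n, ∀ b ∈ C n, grel m d n hd a b → f n a = f n b) ∧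
  (∀ n n', ∀ a ∈ C n, ∀ b ∈ C n', f (n + n') (dsum a b) = dsumW (f n a) (f n' b)) ∧
  (∀ n (s : (Matrix (Fin n) (Fin n) R)ˣ), ∀ a ∈ C n,
    simAct (s : Matrix (Fin n) (Fin n) R) a ∈ C n →
    f n (simAct (s : Matrix (Fin n) (Fin n) R) a) =
      rmulR (rmulL (s : Matrix (Fin n) (Fin n) R) (f n a))
        ((s⁻¹ : (Matrix (Fin n) (Fin n) R)ˣ) : Matrix (Fin n) (Fin n) R))

/-- `(u,v)`-admissibility of an nc set. -/
def Admissible (R : Type) [CommRing R] [Algebra R A] {m d : ℕ} (hd : d ≤ m)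
    (C : ∀ n, Set (BMat A m n)) (u : Fin (m - d)) (v : Fin d) : Prop :=
  ∀ n n' (a : BMat A m n) (b : BMat A m n') (X : Matrix (Fin n) (Fin n') A),
    a ∈ C n → b ∈ C n' →
    ∃ r : Rˣ, ins hd u v a b ((r : R) • X) ∈ C (n + n')

/-- The similarity-invariant envelope of an nc set. -/
def envC (R : Type) [CommRing R] [Algebra R A] {m d : ℕ} (hd : d ≤ m)
    (C : ∀ n, Set (BMat A m n)) : ∀ n, Set (BMat A m n) :=
  fun n => {x | ∃ (s : (Matrix (Fin n) (Fin n) R)ˣ) (a : BMat A m n),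
    a ∈ C n ∧ grel m d n hd x (simAct (s : Matrix (Fin n) (Fin n) R) a)}

end NC

section Res

variable {R : Type} [CommRing R] {A : Type} [Ring A] [Algebra R A]

/-- Entrywise inclusion `M_m(M_n(B)) → M_m(M_n(A))` for a subalgebra `B ⊆ A`. -/
def bmap (D : Subalgebra R A) {m n : ℕ} (b : BMat (↥D) m n) : BMat A m n :=
  Matrix.of fun i j => (b i j).map (fun x => (x : A))

/-- Entrywise inclusion for rectangular matrices over a subalgebra. -/
def rcmap (D : Subalgebra R A) {n n' : ℕ} (X : Matrix (Fin n) (Fin n') ↥D) :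
    Matrix (Fin n) (Fin n') A :=
  X.map (fun x => (x : A))

/-- `X` is invertible in `M_m(M_n(B))` for the subalgebra `B = D ⊆ A`. -/
def invIn (D : Subalgebra R A) {m n : ℕ} (X : BMat A m n) : Prop :=
  (∀ i j k l, X i j k l ∈ D) ∧
  ∃ Y : BMat A m n, (∀ i j k l, Y i j k l ∈ D) ∧ X * Y = 1 ∧ Y * X = 1

/-- The amplification `a^{⊕̃ n}` of an element `a ∈ M_m(A) = M_m(M_1(A))`. -/
def ampl {m : ℕ} (a : BMat A m 1) (n : ℕ) : BMat A m n :=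
  Matrix.of fun i j => Matrix.diagonal (fun _ => a i j 0 0)

/-- The matrix `r^{(d;m)}(P;Q)`: first `m-d` block columns are the last `m-d` block
columns of `P`, last `d` block columns are the last `d` block columns of `Q`. -/
def rmat {m d n : ℕ} (hd : d ≤ m) (P Q : BMat A m n) : BMat A m n :=
  Matrix.of fun i j =>
    if h : (j : ℕ) < m - d then P i ⟨d + (j : ℕ), by omega⟩ else Q i j

/-- The value `[B_{v,m-d+1},…,B_{v,m}] ⋅ ζ_u` of the `(d;m)`-Grassmannian resolvent,
where `ζ_u` is the `u`-th bottom block column of the inverse `Rinv` of an `r`-matrix. -/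
def resVal {m d n : ℕ} (hd : d ≤ m) (v : Fin d) (u : Fin (m - d))
    (Bm Rinv : BMat A m n) : Mat A n :=
  ∑ j : Fin d,
    Bm ⟨(v : ℕ), lt_of_lt_of_le v.isLt hd⟩ ⟨m - d + (j : ℕ), by have := j.isLt; omega⟩ *
    Rinv ⟨m - d + (j : ℕ), by have := j.isLt; omega⟩ ⟨d + (u : ℕ), by have := u.isLt; omega⟩

/-- Membership in the `(d;m)`-Grassmannian `B`-resolvent set of `π` (represented by `p`):
`b` represents an element of `Gr^{(d;m)}_n(B)` such that `π^{⊕n}` and `b` are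
transversal in `A`. -/
def ResMem {m d : ℕ} (hd : d ≤ m) (p : BMat A m 1) (D : Subalgebra R A) {n : ℕ}
    (b : BMat (↥D) m n) : Prop :=
  IsUnit b ∧ IsUnit (rmat hd (ampl p n) (bmap D b))

end Res

/-!
All three identities are instances of one block computation: if `T Q = P T'`, then
`[[I, T], [0, I]] (P ⊕ Q) = (P ⊕ Q) [[I, T'], [0, I]]`. Applied to every block entry of a
representative, this turns left multiplication by `t^{⊕m}` into right multiplication by the
block-diagonal matrix `diag(u, …, u)` with `u = [[I, T'], [0, I]]` invertible, and such a matrix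
lies in `H^{(d;m)}`. For (i) and (ii) one takes `T' = T`, for (iii) `T' = I` since
`s⁻¹ (s σ) = σ`.
-/

theorem isUnit_diagonal_const {ι B : Type} [Fintype ι] [DecidableEq ι] [Semiring B] {u : B}
    (hu : IsUnit u) : IsUnit (Matrix.diagonal fun _ : ι => u) := by
  simpa using hu.map (Matrix.scalar ι)

theorem isUnit_submatrix_diagonal_const {ι κ B : Type} [Fintype ι] [DecidableEq ι] [Fintype κ]
    [DecidableEq κ] [Semiring B] {u : B} (hu : IsUnit u) {e : ι → κ} (he : Function.Injective e) :
    IsUnit ((Matrix.diagonal fun _ : κ => u).submatrix e e) := by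
  rw [Matrix.submatrix_diagonal _ e he]
  exact isUnit_diagonal_const hu

section Identities

variable {R : Type} [CommRing R] {A : Type} [Ring A] [Algebra R A]

theorem memH_diagonal {m d n : ℕ} (hd : d ≤ m) {u : Mat A n} (hu : IsUnit u) :
    memH m d n hd (Matrix.diagonal fun _ => u) := by
  refine ⟨isUnit_diagonal_const hu, fun i j hi hj => Matrix.diagonal_apply_ne _ ?_,
    isUnit_submatrix_diagonal_const hu ?_, isUnit_submatrix_diagonal_const hu ?_⟩
  · exact fun h => by rw [h] at hi; omega
  · exact fun i j h => Fin.ext (by simpa using h)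
  · exact fun i j h => Fin.ext (by simpa using h)

theorem grel_simAct_of_forall_mul_eq {m d N : ℕ} (hd : d ≤ m) (t : Matrix (Fin N) (Fin N) R)
    (Y : BMat A m N) {u : Mat A N} (hu : IsUnit u)
    (h : ∀ i j, t.map (algebraMap R A) * Y i j = Y i j * u) :
    grel m d N hd (simAct t Y) Y :=
  ⟨Matrix.diagonal fun _ => u, memH_diagonal hd hu,
    Matrix.ext fun i j => by rw [Matrix.mul_diagonal]; exact h i j⟩

theorem isUnit_uptri {p q : ℕ} (T : Matrix (Fin p) (Fin q) R) : IsUnit (uptri R T) := by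
  rw [Matrix.isUnit_iff_isUnit_det, uptri, Matrix.det_reindex_self,
    Matrix.det_fromBlocks_zero₂₁]
  simp

theorem uptri_map {p q : ℕ} (T : Matrix (Fin p) (Fin q) R) :
    (uptri R T).map (algebraMap R A) =
      Matrix.reindex finSumFinEquiv finSumFinEquiv
        (Matrix.fromBlocks 1 (T.map (algebraMap R A)) 0 1) := by
  simp [uptri, ← Matrix.submatrix_map, Matrix.fromBlocks_map]

theorem uptri_map_mul_dsumMat {p q : ℕ} {T T' : Matrix (Fin p) (Fin q) R} {P : Mat A p}
    {Q : Mat A q} (h : T.map (algebraMap R A) * Q = P * T'.map (algebraMap R A)) :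
    (uptri R T).map (algebraMap R A) * dsumMat P Q =
      dsumMat P Q * (uptri R T').map (algebraMap R A) := by
  simp only [uptri_map, dsumMat, Matrix.reindex_apply, Matrix.submatrix_mul_equiv,
    Matrix.fromBlocks_multiply]
  simp [h]

theorem grel_simAct_uptri_dsum {m d p q : ℕ} (hd : d ≤ m) {T T' : Matrix (Fin p) (Fin q) R}
    {P : BMat A m p} {Q : BMat A m q}
    (h : ∀ i j, T.map (algebraMap R A) * Q i j = P i j * T'.map (algebraMap R A)) :
    grel m d (p + q) hd (simAct (uptri R T) (dsum P Q)) (dsum P Q) :=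
  grel_simAct_of_forall_mul_eq hd _ _ ((isUnit_uptri T').map (algebraMap R A).mapMatrix)
    fun i j => uptri_map_mul_dsumMat (h i j)

theorem vcat_eq_submatrix_fromRows {α : Type} {p p' q : ℕ} (X : Matrix (Fin p) (Fin q) α)
    (Y : Matrix (Fin p') (Fin q) α) :
    vcat X Y = (Matrix.fromRows X Y).submatrix finSumFinEquiv.symm id := by
  ext i j
  refine Fin.addCases (fun i => ?_) (fun i => ?_) i <;> simp [vcat]

theorem vcat_map {α β : Type} {p p' q : ℕ} (f : α → β) (X : Matrix (Fin p) (Fin q) α)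
    (Y : Matrix (Fin p') (Fin q) α) : (vcat X Y).map f = vcat (X.map f) (Y.map f) := by
  simp only [vcat_eq_submatrix_fromRows, ← Matrix.submatrix_map, Matrix.fromRows_map]

theorem vcat_mul {α : Type} [Semiring α] {p p' q r : ℕ}
    (X : Matrix (Fin p) (Fin q) α) (Y : Matrix (Fin p') (Fin q) α) (Z : Matrix (Fin q) (Fin r) α) : vcat X Y * Z = vcat (X * Z) (Y * Z) := by
  simp only [vcat_eq_submatrix_fromRows, ← Matrix.fromRows_mul]
  exact Matrix.submatrix_mul_equiv _ _ _ (Equiv.refl _) _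

theorem dsumMat_mul_vcat {n n' q : ℕ} (P : Mat A n) (Q : Mat A n')
    (X : Matrix (Fin n) (Fin q) A) (Y : Matrix (Fin n') (Fin q) A) :
    dsumMat P Q * vcat X Y = vcat (P * X) (Q * Y) := by
  simp only [dsumMat, vcat_eq_submatrix_fromRows, Matrix.reindex_apply]
  rw [Matrix.submatrix_mul_equiv _ _ _ finSumFinEquiv.symm, Matrix.fromBlocks_mul_fromRows]
  simp

end Identities

theorem basic_identities_general {R : Type} [CommRing R] {A : Type} [Ring A] [Algebra R A]
    (m d : ℕ) (hd : d ≤ m) {n n' : ℕ}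
    (a : BMat A m n) (b : BMat A m n')
    (s : (Matrix (Fin n) (Fin n) R)ˣ) :
    grel m d (n + n' + n) hd
      (simAct (uptri R (vcat (1 : Matrix (Fin n) (Fin n) R)
          (0 : Matrix (Fin n') (Fin n) R))) (dsum (dsum a b) a))
      (dsum (dsum a b) a) ∧
    grel m d (n + n' + n') hd
      (simAct (uptri R (vcat (0 : Matrix (Fin n) (Fin n') R)
          (1 : Matrix (Fin n') (Fin n') R))) (dsum (dsum a b) b))
      (dsum (dsum a b) b) ∧
    grel m d (n + n) hd
      (simAct (uptri R ((s⁻¹ : (Matrix (Fin n) (Fin n) R)ˣ) : Matrix (Fin n) (Fin n) R))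
        (dsum a (simAct (s : Matrix (Fin n) (Fin n) R) a)))
      (dsum a (simAct (s : Matrix (Fin n) (Fin n) R) a)) := by
  refine ⟨grel_simAct_uptri_dsum (T' := vcat 1 0) hd fun i j => ?_,
    grel_simAct_uptri_dsum (T' := vcat 0 1) hd fun i j => ?_,
    grel_simAct_uptri_dsum (T' := 1) hd fun i j => ?_⟩
  · simp [dsum, vcat_map, vcat_mul, dsumMat_mul_vcat]
  · simp [dsum, vcat_map, vcat_mul, dsumMat_mul_vcat]
  · rw [simAct, Matrix.of_apply, ← Matrix.mul_assoc, ← Matrix.map_mul, s.inv_mul]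
    simp

/-- the three identities used in the proof of the Grassmannian
intertwining property. -/
theorem basic_identities {R : Type} [CommRing R] {A : Type} [Ring A] [Algebra R A]
    (m d : ℕ) (hd1 : 1 ≤ d) (hd : d ≤ m) {n n' : ℕ}
    (C : ∀ n, Set (BMat A m n)) (hC : IsNCSetCarrier hd C)
    (a : BMat A m n) (b : BMat A m n') (ha : a ∈ C n) (hb : b ∈ C n')
    (s : (Matrix (Fin n) (Fin n) R)ˣ) :
    grel m d (n + n' + n) hd
      (simAct (uptri R (vcat (1 : Matrix (Fin n) (Fin n) R)
          (0 : Matrix (Fin n') (Fin n) R))) (dsum (dsum a b) a))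
      (dsum (dsum a b) a) ∧
    grel m d (n + n' + n') hd
      (simAct (uptri R (vcat (0 : Matrix (Fin n) (Fin n') R)
          (1 : Matrix (Fin n') (Fin n') R))) (dsum (dsum a b) b))
      (dsum (dsum a b) b) ∧
    grel m d (n + n) hd
      (simAct (uptri R ((s⁻¹ : (Matrix (Fin n) (Fin n) R)ˣ) : Matrix (Fin n) (Fin n) R))
        (dsum a (simAct (s : Matrix (Fin n) (Fin n) R) a)))
      (dsum a (simAct (s : Matrix (Fin n) (Fin n) R) a)) :=
  basic_identities_general m d hd a b s
end

section
/- Uniqueness of the restriction of an nc function to a similarity-invariant envelope: let Ω be an nc set over Gr^{(d;m)}(A) and let Ω̂ be its similarity-invariant envelope, Ω̂_n = {s·σ : s ∈ GL_n(R), σ ∈ Ω_n}. Then Ω̂ is an nc set over Gr^{(d;m)}(A) satisfying s·Ω̂_n = Ω̂_n for all s ∈ GL_n(R), and for every nc function f : Ω → M(B) there exists a unique nc function f̂ : Ω̂ → M(B) with f̂|_Ω = f. -/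
open Matrix

/-!
Every `x` in the envelope has a presentation `x ~ s · a` with `s` invertible and `a ∈ Ω`, and
an nc extension of `f` is forced to take the value `s f(a) s⁻¹` at `x`: this gives uniqueness,
and defines `f̂` by choosing a presentation. The choice does not matter, since two presentations
`s · a ~ t · b` give `(t⁻¹ s) · a ~ b`, so `(t⁻¹ s) · a ∈ Ω` and similarity preservation of `f`
yields `f(b) = (t⁻¹ s) f(a) (t⁻¹ s)⁻¹`. Direct sums and similarities of presentations are
presentations again (block lower triangular matrices form a group stable under direct sums),
so `f̂` is nc.
-/

variable {R : Type} [CommRing R] {A : Type} [Ring A] [Algebra R A]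

section BlockTriangular

variable {m d : ℕ} (hd : d ≤ m) {n : ℕ}

/-- The splitting `Fin m ≃ Fin (m - d) ⊕ Fin d` in which `memH` is block lower triangular. -/
def blockEquiv : (Fin (m - d) ⊕ Fin d) ≃ Fin m :=
  finSumFinEquiv.trans (finCongr (by omega))

def toBlockForm (Γ : BMat A m n) :
    Matrix (Fin (m - d) ⊕ Fin d) (Fin (m - d) ⊕ Fin d) (Mat A n) :=
  Γ.submatrix (blockEquiv hd) (blockEquiv hd)

lemma toBlockForm_mul (Γ Δ : BMat A m n) :
    toBlockForm hd (Γ * Δ) = toBlockForm hd Γ * toBlockForm hd Δ :=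
  (submatrix_mul_equiv Γ Δ _ (blockEquiv hd) _).symm

lemma toBlockForm_one : toBlockForm hd (1 : BMat A m n) = 1 :=
  submatrix_one_equiv _

lemma memH_iff (Γ : BMat A m n) :
    memH m d n hd Γ ↔ IsUnit Γ ∧ (toBlockForm hd Γ).toBlocks₁₂ = 0 ∧
      IsUnit (toBlockForm hd Γ).toBlocks₁₁ ∧ IsUnit (toBlockForm hd Γ).toBlocks₂₂ := by
  have hinl (i : Fin (m - d)) : blockEquiv hd (Sum.inl i) = ⟨i, by omega⟩ :=
    Fin.ext (by simp [blockEquiv])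
  have hinr (j : Fin d) : blockEquiv hd (Sum.inr j) = ⟨m - d + j, by omega⟩ :=
    Fin.ext (by simp [blockEquiv])
  have h₁₂ : (toBlockForm hd Γ).toBlocks₁₂ = 0 ↔
      ∀ i j : Fin m, (i : ℕ) < m - d → m - d ≤ (j : ℕ) → Γ i j = 0 := by
    refine ⟨fun h i j hi hj => ?_, fun h => ext fun i j => h _ _ (by simp [hinl]) (by simp [hinr])⟩
    have := congr_fun₂ h ⟨i, hi⟩ ⟨j - (m - d), by omega⟩
    simp only [toBlocks₁₂, toBlockForm, of_apply, submatrix_apply, hinl, hinr,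
      Matrix.zero_apply] at this
    convert this using 2
    ext
    simp
    omega
  rw [memH, h₁₂]
  simp only [toBlocks₁₁, toBlocks₂₂, toBlockForm, submatrix_apply, hinl, hinr]

lemma memH_one : memH m d n hd (1 : BMat A m n) := by
  rw [memH_iff, toBlockForm_one, ← fromBlocks_one, toBlocks_fromBlocks₁₂,
    toBlocks_fromBlocks₁₁, toBlocks_fromBlocks₂₂]
  exact ⟨isUnit_one, rfl, isUnit_one, isUnit_one⟩

lemma eq_fromBlocks_of_toBlocks₁₂_eq_zero {ι κ α : Type} [Zero α]
    {M : Matrix (ι ⊕ κ) (ι ⊕ κ) α} (h : M.toBlocks₁₂ = 0) :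
    M = fromBlocks M.toBlocks₁₁ 0 M.toBlocks₂₁ M.toBlocks₂₂ :=
  h ▸ (fromBlocks_toBlocks M).symm

lemma memH_mul {Γ Δ : BMat A m n} (hΓ : memH m d n hd Γ) (hΔ : memH m d n hd Δ) :
    memH m d n hd (Γ * Δ) := by
  rw [memH_iff] at hΓ hΔ ⊢
  obtain ⟨hΓ, hΓ₁₂, hΓ₁₁, hΓ₂₂⟩ := hΓ
  obtain ⟨hΔ, hΔ₁₂, hΔ₁₁, hΔ₂₂⟩ := hΔ
  refine ⟨hΓ.mul hΔ, ?_⟩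
  rw [toBlockForm_mul, eq_fromBlocks_of_toBlocks₁₂_eq_zero hΓ₁₂,
    eq_fromBlocks_of_toBlocks₁₂_eq_zero hΔ₁₂, fromBlocks_multiply]
  simp only [toBlocks_fromBlocks₁₁, toBlocks_fromBlocks₁₂, toBlocks_fromBlocks₂₂,
    Matrix.mul_zero, Matrix.zero_mul, add_zero, zero_add, true_and]
  exact ⟨hΓ₁₁.mul hΔ₁₁, hΓ₂₂.mul hΔ₂₂⟩

/-- The inverse of `[[X, 0], [Y, Z]]` is `[[X⁻¹, 0], [-Z⁻¹ Y X⁻¹, Z⁻¹]]`. -/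
lemma memH_of_mul_eq_one {Γ Δ : BMat A m n} (hΓ : memH m d n hd Γ) (hΓΔ : Γ * Δ = 1)
    (hΔΓ : Δ * Γ = 1) : memH m d n hd Δ := by
  rw [memH_iff] at hΓ ⊢
  obtain ⟨-, hΓ₁₂, ⟨X, hX⟩, ⟨Z, hZ⟩⟩ := hΓ
  set Y := (toBlockForm hd Γ).toBlocks₂₁
  have hΓ' : toBlockForm hd Γ = fromBlocks X.val 0 Y Z.val := by
    rw [hX, hZ]; exact eq_fromBlocks_of_toBlocks₁₂_eq_zero hΓ₁₂
  have hright : toBlockForm hd Γ * fromBlocks X⁻¹.val 0 (-(Z⁻¹.val * Y * X⁻¹.val)) Z⁻¹.val = 1 := by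
    rw [hΓ', fromBlocks_multiply]
    simp only [Matrix.mul_zero, Matrix.zero_mul, add_zero, zero_add, Matrix.mul_neg,
      ← Matrix.mul_assoc, Units.mul_inv, Matrix.one_mul, add_neg_cancel, neg_zero, fromBlocks_one]
  have hΔ' : toBlockForm hd Δ = fromBlocks X⁻¹.val 0 (-(Z⁻¹.val * Y * X⁻¹.val)) Z⁻¹.val :=
    left_inv_eq_right_inv (by rw [← toBlockForm_mul, hΔΓ, toBlockForm_one]) hright
  rw [hΔ', toBlocks_fromBlocks₁₁, toBlocks_fromBlocks₁₂, toBlocks_fromBlocks₂₂]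
  exact ⟨⟨⟨Δ, Γ, hΔΓ, hΓΔ⟩, rfl⟩, rfl, X⁻¹.isUnit, Z⁻¹.isUnit⟩

end BlockTriangular

section SimilarityAction

variable {m n : ℕ}

variable (R A m n) in
def scalarBlockHom : Matrix (Fin n) (Fin n) R →+* BMat A m n :=
  (scalar (Fin m)).comp (algebraMap R A).mapMatrix

lemma simAct_eq_mul (s : Matrix (Fin n) (Fin n) R) (X : BMat A m n) :
    simAct s X = scalarBlockHom R A m n s * X := by
  ext i j
  simp [simAct, scalarBlockHom, scalar_apply, diagonal_mul, RingHom.mapMatrix_apply]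

lemma simAct_one (X : BMat A m n) : simAct (1 : Matrix (Fin n) (Fin n) R) X = X := by
  rw [simAct_eq_mul, map_one, one_mul]

lemma simAct_mul (s t : Matrix (Fin n) (Fin n) R) (X : BMat A m n) :
    simAct (s * t) X = simAct s (simAct t X) := by
  simp only [simAct_eq_mul, map_mul, mul_assoc]

end SimilarityAction

section Equivalence

variable {m d : ℕ} (hd : d ≤ m) {n : ℕ}

lemma grel_refl (x : BMat A m n) : grel m d n hd x x :=
  ⟨1, memH_one hd, (mul_one x).symm⟩

variable {hd}

lemma grel_symm {x y : BMat A m n} (h : grel m d n hd x y) : grel m d n hd y x := by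
  obtain ⟨Γ, hΓ, rfl⟩ := h
  obtain ⟨u, rfl⟩ := hΓ.1
  exact ⟨u⁻¹.val, memH_of_mul_eq_one hd hΓ u.mul_inv u.inv_mul,
    by rw [mul_assoc, u.mul_inv, mul_one]⟩

lemma grel_trans {x y z : BMat A m n} (hxy : grel m d n hd x y) (hyz : grel m d n hd y z) :
    grel m d n hd x z := by
  obtain ⟨Γ, hΓ, rfl⟩ := hxy
  obtain ⟨Δ, hΔ, rfl⟩ := hyz
  exact ⟨Δ * Γ, memH_mul hd hΔ hΓ, mul_assoc _ _ _⟩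

lemma grel_simAct (s : Matrix (Fin n) (Fin n) R) {x y : BMat A m n} (h : grel m d n hd x y) :
    grel m d n hd (simAct s x) (simAct s y) := by
  obtain ⟨Γ, hΓ, rfl⟩ := h
  exact ⟨Γ, hΓ, by rw [simAct_eq_mul, simAct_eq_mul, mul_assoc]⟩

end Equivalence

section DirectSum

variable {m n n' : ℕ}

lemma dsumMat_mul (X Y : Mat A n) (X' Y' : Mat A n') :
    dsumMat X X' * dsumMat Y Y' = dsumMat (X * Y) (X' * Y') := by
  simp only [dsumMat, reindex_apply, submatrix_mul_equiv, fromBlocks_multiply, Matrix.mul_zero,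
    Matrix.zero_mul, add_zero, zero_add]

lemma dsumMat_one : dsumMat (1 : Mat A n) (1 : Mat A n') = 1 := by
  rw [dsumMat, fromBlocks_one, reindex_apply, submatrix_one_equiv]

lemma dsumMat_zero : dsumMat (0 : Mat A n) (0 : Mat A n') = 0 := by
  rw [dsumMat, fromBlocks_zero, reindex_apply, submatrix_zero, Pi.zero_apply, Pi.zero_apply]

lemma dsumMat_add (X Y : Mat A n) (X' Y' : Mat A n') :
    dsumMat (X + Y) (X' + Y') = dsumMat X X' + dsumMat Y Y' := by
  change _ = reindex _ _ (fromBlocks X 0 0 X' + fromBlocks Y 0 0 Y')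
  rw [fromBlocks_add, add_zero, add_zero, dsumMat]

lemma sum_dsumMat {ι : Type} (s : Finset ι) (f : ι → Mat A n) (g : ι → Mat A n') :
    ∑ k ∈ s, dsumMat (f k) (g k) = dsumMat (∑ k ∈ s, f k) (∑ k ∈ s, g k) := by
  classical
  induction s using Finset.induction_on with
  | empty => simp only [Finset.sum_empty, dsumMat_zero]
  | insert k s hk ih => simp only [Finset.sum_insert hk, ih, dsumMat_add]

lemma dsum_mul (a b : BMat A m n) (a' b' : BMat A m n') :
    dsum a a' * dsum b b' = dsum (a * b) (a' * b') := by
  ext1 i j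
  simp only [dsum, mul_apply, of_apply, dsumMat_mul, sum_dsumMat]

lemma dsum_one : dsum (1 : BMat A m n) (1 : BMat A m n') = 1 := by
  ext1 i j
  rcases eq_or_ne i j with rfl | h
  · simp [dsum, dsumMat_one]
  · simp [dsum, one_apply_ne h, dsumMat_zero]

lemma isUnit_dsum {a : BMat A m n} {b : BMat A m n'} (ha : IsUnit a) (hb : IsUnit b) :
    IsUnit (dsum a b) := by
  obtain ⟨u, rfl⟩ := ha
  obtain ⟨v, rfl⟩ := hb
  exact ⟨⟨dsum u.val v.val, dsum u⁻¹.val v⁻¹.val, by rw [dsum_mul, u.mul_inv, v.mul_inv, dsum_one],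
    by rw [dsum_mul, u.inv_mul, v.inv_mul, dsum_one]⟩, rfl⟩

lemma memH_dsum {d : ℕ} (hd : d ≤ m) {Γ : BMat A m n} {Γ' : BMat A m n'}
    (hΓ : memH m d n hd Γ) (hΓ' : memH m d n' hd Γ') : memH m d (n + n') hd (dsum Γ Γ') := by
  rw [memH_iff] at hΓ hΓ' ⊢
  obtain ⟨hΓ, hΓ₁₂, hΓ₁₁, hΓ₂₂⟩ := hΓ
  obtain ⟨hΓ', hΓ'₁₂, hΓ'₁₁, hΓ'₂₂⟩ := hΓ'
  set T := toBlockForm hd Γ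
  set T' := toBlockForm hd Γ'
  have h₁₁ : (toBlockForm hd (dsum Γ Γ')).toBlocks₁₁ = dsum T.toBlocks₁₁ T'.toBlocks₁₁ := rfl
  have h₂₂ : (toBlockForm hd (dsum Γ Γ')).toBlocks₂₂ = dsum T.toBlocks₂₂ T'.toBlocks₂₂ := rfl
  refine ⟨isUnit_dsum hΓ hΓ', ?_, h₁₁ ▸ isUnit_dsum hΓ₁₁ hΓ'₁₁, h₂₂ ▸ isUnit_dsum hΓ₂₂ hΓ'₂₂⟩
  ext1 i j
  change dsumMat (T.toBlocks₁₂ i j) (T'.toBlocks₁₂ i j) = 0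
  rw [hΓ₁₂, hΓ'₁₂]
  exact dsumMat_zero

end DirectSum

section ScalarDirectSum

variable {p q : ℕ}

lemma dsumW_mul {α : Type} [Semiring α] (s s' : Matrix (Fin p) (Fin p) α)
    (t t' : Matrix (Fin q) (Fin q) α) :
    dsumW s t * dsumW s' t' = dsumW (s * s') (t * t') := by
  simp only [dsumW, reindex_apply, submatrix_mul_equiv, fromBlocks_multiply, Matrix.mul_zero,
    Matrix.zero_mul, add_zero, zero_add]

lemma dsumW_one {α : Type} [Semiring α] :
    dsumW (1 : Matrix (Fin p) (Fin p) α) (1 : Matrix (Fin q) (Fin q) α) = 1 := by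
  rw [dsumW, fromBlocks_one, reindex_apply, submatrix_one_equiv]

def dsumUnit (s : (Matrix (Fin p) (Fin p) R)ˣ) (t : (Matrix (Fin q) (Fin q) R)ˣ) :
    (Matrix (Fin (p + q)) (Fin (p + q)) R)ˣ where
  val := dsumW s.val t.val
  inv := dsumW s⁻¹.val t⁻¹.val
  val_inv := by rw [dsumW_mul, s.mul_inv, t.mul_inv, dsumW_one]
  inv_val := by rw [dsumW_mul, s.inv_mul, t.inv_mul, dsumW_one]

lemma simAct_dsum {m : ℕ} (s : Matrix (Fin p) (Fin p) R) (t : Matrix (Fin q) (Fin q) R)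
    (a : BMat A m p) (b : BMat A m q) :
    simAct (dsumW s t) (dsum a b) = dsum (simAct s a) (simAct t b) := by
  have hmap : (dsumW s t).map (algebraMap R A) =
      dsumMat (s.map (algebraMap R A)) (t.map (algebraMap R A)) := by
    rw [dsumW, dsumMat, reindex_apply, reindex_apply, ← submatrix_map, fromBlocks_map,
      Matrix.map_zero _ (map_zero _), Matrix.map_zero _ (map_zero _)]
  ext1 i j
  simp only [simAct, dsum, of_apply, hmap, dsumMat_mul]

lemma grel_dsum {m d : ℕ} {hd : d ≤ m} {x a : BMat A m p} {y b : BMat A m q}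
    (s : (Matrix (Fin p) (Fin p) R)ˣ) (t : (Matrix (Fin q) (Fin q) R)ˣ)
    (hx : grel m d p hd x (simAct s.val a)) (hy : grel m d q hd y (simAct t.val b)) :
    grel m d (p + q) hd (dsum x y) (simAct (dsumUnit s t).val (dsum a b)) := by
  obtain ⟨Γ, hΓ, rfl⟩ := hx
  obtain ⟨Γ', hΓ', rfl⟩ := hy
  exact ⟨dsum Γ Γ', memH_dsum hd hΓ hΓ', by rw [dsumUnit, simAct_dsum, dsum_mul]⟩

end ScalarDirectSum

section Conjugation

variable {W : Type} [AddCommMonoid W] [Module R W] {p : ℕ}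

lemma rmulL_one {q : ℕ} (X : Matrix (Fin p) (Fin q) W) :
    rmulL (R := R) 1 X = X := by
  ext i j
  simp [rmulL, one_apply, ite_smul]

lemma rmulR_one {q : ℕ} (X : Matrix (Fin q) (Fin p) W) :
    rmulR (R := R) X 1 = X := by
  ext i j
  simp [rmulR, one_apply, ite_smul]

lemma rmulL_rmulL {q r u : ℕ} (s : Matrix (Fin p) (Fin q) R) (t : Matrix (Fin q) (Fin r) R)
    (X : Matrix (Fin r) (Fin u) W) : rmulL s (rmulL t X) = rmulL (s * t) X := by
  ext i j
  simp only [rmulL, of_apply, mul_apply, Finset.smul_sum, Finset.sum_smul, mul_smul]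
  exact Finset.sum_comm

lemma rmulR_rmulR {q r u : ℕ} (X : Matrix (Fin p) (Fin q) W) (s : Matrix (Fin q) (Fin r) R)
    (t : Matrix (Fin r) (Fin u) R) : rmulR (rmulR X s) t = rmulR X (s * t) := by
  ext i j
  simp only [rmulR, of_apply, mul_apply, Finset.smul_sum, Finset.sum_smul, smul_smul, mul_comm]
  exact Finset.sum_comm

lemma rmulL_rmulR {q r u : ℕ} (s : Matrix (Fin p) (Fin q) R) (X : Matrix (Fin q) (Fin r) W)
    (t : Matrix (Fin r) (Fin u) R) : rmulL s (rmulR X t) = rmulR (rmulL s X) t := by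
  ext i j
  simp only [rmulL, rmulR, of_apply, Finset.smul_sum, smul_smul, mul_comm]
  exact Finset.sum_comm

def simConj (s : (Matrix (Fin p) (Fin p) R)ˣ) (X : Matrix (Fin p) (Fin p) W) :
    Matrix (Fin p) (Fin p) W :=
  rmulR (rmulL s.val X) s⁻¹.val

lemma simConj_one (X : Matrix (Fin p) (Fin p) W) : simConj (R := R) 1 X = X := by
  rw [simConj, inv_one, Units.val_one, rmulL_one, rmulR_one]

lemma simConj_mul (s t : (Matrix (Fin p) (Fin p) R)ˣ) (X : Matrix (Fin p) (Fin p) W) :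
    simConj (s * t) X = simConj s (simConj t X) := by
  rw [simConj, simConj, simConj, rmulL_rmulR, rmulL_rmulL, rmulR_rmulR, _root_.mul_inv_rev,
    Units.val_mul, Units.val_mul]

lemma rmulL_dsumW {q : ℕ} (s : Matrix (Fin p) (Fin p) R) (t : Matrix (Fin q) (Fin q) R)
    (P : Matrix (Fin p) (Fin p) W) (Q : Matrix (Fin q) (Fin q) W) :
    rmulL (dsumW s t) (dsumW P Q) = dsumW (rmulL s P) (rmulL t Q) := by
  ext i j
  obtain ⟨i, rfl⟩ := finSumFinEquiv.surjective i
  obtain ⟨j, rfl⟩ := finSumFinEquiv.surjective j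
  rcases i with i | i <;> rcases j with j | j <;>
    simp [rmulL, dsumW, ← Equiv.sum_comp finSumFinEquiv, Fintype.sum_sum_type]

lemma rmulR_dsumW {q : ℕ} (s : Matrix (Fin p) (Fin p) R) (t : Matrix (Fin q) (Fin q) R)
    (P : Matrix (Fin p) (Fin p) W) (Q : Matrix (Fin q) (Fin q) W) :
    rmulR (dsumW P Q) (dsumW s t) = dsumW (rmulR P s) (rmulR Q t) := by
  ext i j
  obtain ⟨i, rfl⟩ := finSumFinEquiv.surjective i
  obtain ⟨j, rfl⟩ := finSumFinEquiv.surjective j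
  rcases i with i | i <;> rcases j with j | j <;>
    simp [rmulR, dsumW, ← Equiv.sum_comp finSumFinEquiv, Fintype.sum_sum_type]

lemma simConj_dsumUnit {q : ℕ} (s : (Matrix (Fin p) (Fin p) R)ˣ)
    (t : (Matrix (Fin q) (Fin q) R)ˣ) (P : Matrix (Fin p) (Fin p) W)
    (Q : Matrix (Fin q) (Fin q) W) :
    simConj (dsumUnit s t) (dsumW P Q) = dsumW (simConj s P) (simConj t Q) :=
  (congr_arg (rmulR · _) (rmulL_dsumW _ _ P Q)).trans (rmulR_dsumW _ _ _ _)

end Conjugation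

section Envelope

variable {m d : ℕ} {hd : d ≤ m} {C : ∀ n, Set (BMat A m n)} {n : ℕ}

lemma mem_envC_of_mem {a : BMat A m n} (ha : a ∈ C n) : a ∈ envC R hd C n :=
  ⟨1, a, ha, by rw [Units.val_one, simAct_one]; exact grel_refl hd a⟩

lemma simAct_mem_envC (s : (Matrix (Fin n) (Fin n) R)ˣ) {x : BMat A m n}
    (hx : x ∈ envC R hd C n) : simAct s.val x ∈ envC R hd C n := by
  obtain ⟨t, a, ha, hxa⟩ := hx
  exact ⟨s * t, a, ha, by rw [Units.val_mul, simAct_mul]; exact grel_simAct _ hxa⟩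

lemma simAct_mem_envC_iff (s : (Matrix (Fin n) (Fin n) R)ˣ) (x : BMat A m n) :
    simAct s.val x ∈ envC R hd C n ↔ x ∈ envC R hd C n := by
  refine ⟨fun h => ?_, simAct_mem_envC s⟩
  simpa [← simAct_mul, simAct_one] using simAct_mem_envC s⁻¹ h

lemma isNCSetCarrier_envC (hC : IsNCSetCarrier hd C) : IsNCSetCarrier hd (envC R hd C) := by
  refine ⟨?_, ?_, ?_⟩
  · rintro n x ⟨s, a, ha, Γ, hΓ, rfl⟩
    rw [simAct_eq_mul]
    exact ((s.isUnit.map (scalarBlockHom R A m n)).mul (hC.1 n a ha)).mul hΓ.1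
  · intro n x y hxy
    exact ⟨fun ⟨s, a, ha, hxa⟩ => ⟨s, a, ha, grel_trans (grel_symm hxy) hxa⟩,
      fun ⟨s, a, ha, hya⟩ => ⟨s, a, ha, grel_trans hxy hya⟩⟩
  · rintro n n' x ⟨s, a, ha, hxa⟩ y ⟨t, b, hb, hyb⟩
    exact ⟨dsumUnit s t, dsum a b, hC.2.2 n n' a ha b hb, grel_dsum s t hxa hyb⟩

end Envelope

section Extension

variable {W : Type} [AddCommMonoid W] [Module R W] {m d : ℕ} {hd : d ≤ m}
  {C : ∀ n, Set (BMat A m n)} {f : ∀ n, BMat A m n → Matrix (Fin n) (Fin n) W}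
  {n : ℕ} {x : BMat A m n}

variable (R hd C f) in
noncomputable def envExt : ∀ n, BMat A m n → Matrix (Fin n) (Fin n) W :=
  open Classical in fun n x =>
    if h : x ∈ envC R hd C n then simConj h.choose (f n h.choose_spec.choose) else 0

lemma simConj_eq_of_grel (hC : IsNCSetCarrier hd C) (hf : IsNCFun R hd C f)
    {s t : (Matrix (Fin n) (Fin n) R)ˣ} {a b : BMat A m n} (ha : a ∈ C n) (hb : b ∈ C n)
    (hxa : grel m d n hd x (simAct s.val a)) (hxb : grel m d n hd x (simAct t.val b)) :
    simConj s (f n a) = simConj t (f n b) := by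
  have hab : grel m d n hd (simAct (t⁻¹ * s).val a) b := by
    simpa only [← simAct_mul, ← Units.val_mul, inv_mul_cancel, Units.val_one, simAct_one] using
      grel_simAct t⁻¹.val (grel_trans (grel_symm hxa) hxb)
  have hmem : simAct (t⁻¹ * s).val a ∈ C n := (hC.2.1 n _ b hab).2 hb
  calc simConj s (f n a) = simConj t (simConj (t⁻¹ * s) (f n a)) := by
        rw [← simConj_mul, mul_inv_cancel_left]
    _ = simConj t (f n b) := by
        rw [← hf.1 n _ hmem b hb hab, hf.2.2 n _ a ha hmem]
        rfl

lemma envExt_eq (hC : IsNCSetCarrier hd C) (hf : IsNCFun R hd C f)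
    (s : (Matrix (Fin n) (Fin n) R)ˣ) {a : BMat A m n} (ha : a ∈ C n)
    (hx : grel m d n hd x (simAct s.val a)) : envExt R hd C f n x = simConj s (f n a) := by
  have h : x ∈ envC R hd C n := ⟨s, a, ha, hx⟩
  rw [envExt, dif_pos h]
  exact simConj_eq_of_grel hC hf h.choose_spec.choose_spec.1 ha h.choose_spec.choose_spec.2 hx

lemma envExt_eq_of_mem (hC : IsNCSetCarrier hd C) (hf : IsNCFun R hd C f) {a : BMat A m n}
    (ha : a ∈ C n) : envExt R hd C f n a = f n a := by
  rw [envExt_eq hC hf 1 ha (by rw [Units.val_one, simAct_one]; exact grel_refl hd a),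
    simConj_one]

lemma isNCFun_envExt (hC : IsNCSetCarrier hd C) (hf : IsNCFun R hd C f) :
    IsNCFun R hd (envC R hd C) (envExt R hd C f) := by
  refine ⟨?_, ?_, ?_⟩
  · rintro n x - y ⟨t, b, hb, hyb⟩ hxy
    rw [envExt_eq hC hf t hb (grel_trans hxy hyb), envExt_eq hC hf t hb hyb]
  · rintro n n' x ⟨s, a, ha, hxa⟩ y ⟨t, b, hb, hyb⟩
    rw [envExt_eq hC hf (dsumUnit s t) (hC.2.2 n n' a ha b hb) (grel_dsum s t hxa hyb),
      envExt_eq hC hf s ha hxa, envExt_eq hC hf t hb hyb, hf.2.1 n n' a ha b hb,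
      simConj_dsumUnit]
  · rintro n u x ⟨t, a, ha, hxa⟩ -
    have hux : grel m d n hd (simAct u.val x) (simAct (u * t).val a) := by
      rw [Units.val_mul, simAct_mul]
      exact grel_simAct _ hxa
    rw [envExt_eq hC hf (u * t) ha hux, envExt_eq hC hf t ha hxa, simConj_mul]
    rfl

lemma eq_simConj_of_isNCFun_envC {g : ∀ n, BMat A m n → Matrix (Fin n) (Fin n) W}
    (hg : IsNCFun R hd (envC R hd C) g) (hgf : ∀ n, ∀ a ∈ C n, g n a = f n a)
    {s : (Matrix (Fin n) (Fin n) R)ˣ} {a : BMat A m n} (ha : a ∈ C n)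
    (hx : grel m d n hd x (simAct s.val a)) : g n x = simConj s (f n a) := by
  have hsa : simAct s.val a ∈ envC R hd C n := ⟨s, a, ha, grel_refl hd _⟩
  rw [hg.1 n x ⟨s, a, ha, hx⟩ _ hsa hx, hg.2.2 n s a (mem_envC_of_mem ha) hsa, hgf n a ha]
  rfl

end Extension

theorem envelope_extension_general {R : Type} [CommRing R] {A : Type} [Ring A] [Algebra R A]
    {W : Type} [AddCommMonoid W] [Module R W]
    (m d : ℕ) (hd : d ≤ m)
    (C : ∀ n, Set (BMat A m n)) (hC : IsNCSetCarrier hd C)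
    (f : ∀ n, BMat A m n → Matrix (Fin n) (Fin n) W) (hf : IsNCFun R hd C f) :
    IsNCSetCarrier hd (envC R hd C) ∧
    (∀ n (s : (Matrix (Fin n) (Fin n) R)ˣ) (x : BMat A m n),
      x ∈ envC R hd C n ↔ simAct (s : Matrix (Fin n) (Fin n) R) x ∈ envC R hd C n) ∧
    (∃ g : ∀ n, BMat A m n → Matrix (Fin n) (Fin n) W,
      IsNCFun R hd (envC R hd C) g ∧ ∀ n, ∀ a ∈ C n, g n a = f n a) ∧
    (∀ g₁ g₂ : ∀ n, BMat A m n → Matrix (Fin n) (Fin n) W,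
      IsNCFun R hd (envC R hd C) g₁ → IsNCFun R hd (envC R hd C) g₂ →
      (∀ n, ∀ a ∈ C n, g₁ n a = f n a) → (∀ n, ∀ a ∈ C n, g₂ n a = f n a) →
      ∀ n, ∀ x ∈ envC R hd C n, g₁ n x = g₂ n x) := by
  refine ⟨isNCSetCarrier_envC hC, fun n s x => (simAct_mem_envC_iff s x).symm,
    ⟨envExt R hd C f, isNCFun_envExt hC hf, fun n a ha => envExt_eq_of_mem hC hf ha⟩, ?_⟩
  rintro g₁ g₂ hg₁ hg₂ hgf₁ hgf₂ n x ⟨s, a, ha, hxa⟩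
  rw [eq_simConj_of_isNCFun_envC hg₁ hgf₁ ha hxa, eq_simConj_of_isNCFun_envC hg₂ hgf₂ ha hxa]

/-- the similarity-invariant envelope is an nc set, is similarity
invariant, and every nc function extends uniquely to it. -/
theorem envelope_extension {R : Type} [CommRing R] {A : Type} [Ring A] [Algebra R A]
    {W : Type} [AddCommMonoid W] [Module R W]
    (m d : ℕ) (hd1 : 1 ≤ d) (hd : d ≤ m)
    (C : ∀ n, Set (BMat A m n)) (hC : IsNCSetCarrier hd C)
    (f : ∀ n, BMat A m n → Matrix (Fin n) (Fin n) W) (hf : IsNCFun R hd C f) :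
    IsNCSetCarrier hd (envC R hd C) ∧
    (∀ n (s : (Matrix (Fin n) (Fin n) R)ˣ) (x : BMat A m n),
      x ∈ envC R hd C n ↔ simAct (s : Matrix (Fin n) (Fin n) R) x ∈ envC R hd C n) ∧
    (∃ g : ∀ n, BMat A m n → Matrix (Fin n) (Fin n) W,
      IsNCFun R hd (envC R hd C) g ∧ ∀ n, ∀ a ∈ C n, g n a = f n a) ∧
    (∀ g₁ g₂ : ∀ n, BMat A m n → Matrix (Fin n) (Fin n) W,
      IsNCFun R hd (envC R hd C) g₁ → IsNCFun R hd (envC R hd C) g₂ →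
      (∀ n, ∀ a ∈ C n, g₁ n a = f n a) → (∀ n, ∀ a ∈ C n, g₂ n a = f n a) →
      ∀ n, ∀ x ∈ envC R hd C n, g₁ n x = g₂ n x) :=
  envelope_extension_general m d hd C hC f hf
end
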